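/- arXiv:2406.04986 — 2 statements merged into one kernel-verified Lean document; each statement's English description precedes it below -/
import Mathlib

section
/- With η := 2(1 + τ²), the shifted extended tilted-CHSH Bell operator admits the sum-of-squares decomposition η·I_{nm} − S = N₀ᴴN₀ + τ²·N₁ᴴN₁, where N₀ᴴ denotes the conjugate transpose of N₀. -/
open Matrix Kronecker

/-- The extended tilted-CHSH Bell operator `S_{θ,φ}`. -/
noncomputable def tiltedBellOp (θ φ τ : ℝ) {n m : ℕ}
    (A₀ A₁ : Matrix (Fin n) (Fin n) ℂ) (B₀ B₁ : Matrix (Fin m) (Fin m) ℂ) :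
    Matrix (Fin n × Fin m) (Fin n × Fin m) ℂ :=
  (Real.cos φ)⁻¹ • (A₀ ⊗ₖ (B₀ + B₁))
    + τ ^ 2 • (Real.sin (2 * θ) • ((Real.sin φ)⁻¹ • (A₁ ⊗ₖ (B₀ - B₁)))
        + Real.cos (2 * θ) •
            ((Real.cos φ)⁻¹ • ((1 : Matrix (Fin n) (Fin n) ℂ) ⊗ₖ (B₀ + B₁))))

/-- The SOS polynomial `N₀ = A₀ ⊗ 1 − 1 ⊗ (B₀+B₁)/(2 cos φ)`. -/
noncomputable def tiltedN₀ (φ : ℝ) {n m : ℕ}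
    (A₀ : Matrix (Fin n) (Fin n) ℂ) (B₀ B₁ : Matrix (Fin m) (Fin m) ℂ) :
    Matrix (Fin n × Fin m) (Fin n × Fin m) ℂ :=
  A₀ ⊗ₖ (1 : Matrix (Fin m) (Fin m) ℂ)
    - (2 * Real.cos φ)⁻¹ • ((1 : Matrix (Fin n) (Fin n) ℂ) ⊗ₖ (B₀ + B₁))

/-- The SOS polynomial
`N₁ = A₁ ⊗ 1 − sin(2θ)·1 ⊗ (B₀−B₁)/(2 sin φ) − cos(2θ)·A₁ ⊗ (B₀+B₁)/(2 cos φ)`. -/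
noncomputable def tiltedN₁ (θ φ : ℝ) {n m : ℕ}
    (A₁ : Matrix (Fin n) (Fin n) ℂ) (B₀ B₁ : Matrix (Fin m) (Fin m) ℂ) :
    Matrix (Fin n × Fin m) (Fin n × Fin m) ℂ :=
  A₁ ⊗ₖ (1 : Matrix (Fin m) (Fin m) ℂ)
    - Real.sin (2 * θ) •
        ((2 * Real.sin φ)⁻¹ • ((1 : Matrix (Fin n) (Fin n) ℂ) ⊗ₖ (B₀ - B₁)))
    - Real.cos (2 * θ) • ((2 * Real.cos φ)⁻¹ • (A₁ ⊗ₖ (B₀ + B₁)))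


/-!
Write `P = B₀ + B₁` and `M = B₀ - B₁` on Bob's side. Alice's operators commute with Bob's and
all four square to one, so expanding `N₀ᴴN₀ + τ²N₁ᴴN₁` leaves `-S`, a constant, and multiples
of `P²` and `M²`; the cross term of `N₁²` drops out because `PM + MP = 2(B₀² - B₁²) = 0`.
The relation defining `τ` makes the coefficients of `P²` and `M²` equal, and then
`P² + M² = 2(B₀² + B₁²) = 4` turns what is left into `2(1 + τ²)`.
-/

section Involutions

variable {R : Type*} [Ring R] {y₀ y₁ : R}

theorem add_mul_sub_add_sub_mul_add_of_mul_self (h₀ : y₀ * y₀ = 1) (h₁ : y₁ * y₁ = 1) :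
    (y₀ + y₁) * (y₀ - y₁) + (y₀ - y₁) * (y₀ + y₁) = 0 := by
  have : (y₀ + y₁) * (y₀ - y₁) + (y₀ - y₁) * (y₀ + y₁) = 2 * (y₀ * y₀ - y₁ * y₁) := by
    noncomm_ring
  rw [this, h₀, h₁, sub_self, mul_zero]

theorem add_mul_add_add_sub_mul_sub_of_mul_self (h₀ : y₀ * y₀ = 1) (h₁ : y₁ * y₁ = 1) :
    (y₀ + y₁) * (y₀ + y₁) + (y₀ - y₁) * (y₀ - y₁) = 4 := by
  have : (y₀ + y₁) * (y₀ + y₁) + (y₀ - y₁) * (y₀ - y₁) = 2 * (y₀ * y₀ + y₁ * y₁) := by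
    noncomm_ring
  rw [this, h₀, h₁]
  norm_num

end Involutions

section SOS

variable {𝕜 R : Type*} [CommRing 𝕜] [Ring R] [Algebra 𝕜 R]

theorem sub_smul_mul_self {x P : R} (hx : x * x = 1) (hxP : Commute x P) (α : 𝕜) :
    (x - α • P) * (x - α • P) = 1 - (2 * α) • (x * P) + α ^ 2 • (P * P) := by
  simp only [sub_mul, mul_sub, smul_mul_assoc, mul_smul_comm, hx, hxP.eq]
  module

theorem sub_smul_sub_smul_mul_mul_self {x P M : R} (hx : x * x = 1) (hxP : Commute x P)
    (hxM : Commute x M) (hPM : P * M + M * P = 0) (β γ : 𝕜) :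
    (x - β • M - γ • (x * P)) * (x - β • M - γ • (x * P))
      = 1 + β ^ 2 • (M * M) + γ ^ 2 • (P * P) - (2 * β) • (x * M) - (2 * γ) • P := by
  have hxPx : x * P * x = P := by rw [mul_assoc, ← hxP.eq, ← mul_assoc, hx, one_mul]
  have hxxP : x * (x * P) = P := by rw [← mul_assoc, hx, one_mul]
  have hxPxP : x * P * (x * P) = P * P := by rw [← mul_assoc, hxPx]
  have hcross : M * (x * P) + x * P * M = 0 := by
    rw [← mul_assoc, ← hxM.eq, mul_assoc, mul_assoc, ← mul_add, add_comm, hPM, mul_zero]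
  simp only [sub_mul, mul_sub, smul_mul_assoc, mul_smul_comm, hx, ← hxM.eq, hxPx, hxxP, hxPxP]
  linear_combination (norm := module) (β * γ) • hcross

theorem tilted_sos_identity {x₀ x₁ y₀ y₁ : R} (hx₀ : x₀ * x₀ = 1) (hx₁ : x₁ * x₁ = 1)
    (hy₀ : y₀ * y₀ = 1) (hy₁ : y₁ * y₁ = 1) (h₀₀ : Commute x₀ y₀) (h₀₁ : Commute x₀ y₁)
    (h₁₀ : Commute x₁ y₀) (h₁₁ : Commute x₁ y₁) {α β γ t : 𝕜}
    (hbal : α ^ 2 + t * γ ^ 2 = t * β ^ 2) (hnorm : 4 * (t * β ^ 2) = 1 + t) :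
    (x₀ - α • (y₀ + y₁)) * (x₀ - α • (y₀ + y₁))
        + t • ((x₁ - β • (y₀ - y₁) - γ • (x₁ * (y₀ + y₁)))
          * (x₁ - β • (y₀ - y₁) - γ • (x₁ * (y₀ + y₁))))
      = (2 * (1 + t)) • 1 - ((2 * α) • (x₀ * (y₀ + y₁))
          + t • ((2 * β) • (x₁ * (y₀ - y₁)) + (2 * γ) • (y₀ + y₁))) := by
  rw [sub_smul_mul_self hx₀ (h₀₀.add_right h₀₁),
    sub_smul_sub_smul_mul_mul_self hx₁ (h₁₀.add_right h₁₁) (h₁₀.sub_right h₁₁)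
      (add_mul_sub_add_sub_mul_add_of_mul_self hy₀ hy₁)]
  have hsq := add_mul_add_add_sub_mul_sub_of_mul_self hy₀ hy₁
  set P := y₀ + y₁
  set M := y₀ - y₁
  have hP : P * P = (4 : 𝕜) • 1 - M * M := by
    rw [Algebra.smul_def, mul_one, map_ofNat, ← hsq, add_sub_cancel_right]
  rw [hP]
  linear_combination (norm := module) hbal • ((4 : 𝕜) • (1 : R) - M * M) + hnorm • (1 : R)

end SOS

namespace Matrix

variable {α : Type*} {l m n p : Type*}

theorem kronecker_sub [NonUnitalNonAssocRing α] (A : Matrix l m α) (B₁ B₂ : Matrix n p α) :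
    A ⊗ₖ (B₁ - B₂) = A ⊗ₖ B₁ - A ⊗ₖ B₂ := by
  ext; simp [mul_sub]

theorem IsHermitian.kronecker [CommSemiring α] [StarRing α] {A : Matrix m m α}
    {B : Matrix n n α} (hA : A.IsHermitian) (hB : B.IsHermitian) : (A ⊗ₖ B).IsHermitian := by
  rw [IsHermitian, conjTranspose_kronecker, hA.eq, hB.eq]

variable [CommSemiring α] [Fintype m] [Fintype n] [DecidableEq m] [DecidableEq n]

theorem kronecker_one_mul_one_kronecker (A : Matrix m m α) (B : Matrix n n α) :
    (A ⊗ₖ 1) * (1 ⊗ₖ B) = A ⊗ₖ B := by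
  rw [← mul_kronecker_mul, Matrix.mul_one, Matrix.one_mul]

theorem commute_kronecker_one_one_kronecker (A : Matrix m m α) (B : Matrix n n α) :
    Commute (A ⊗ₖ (1 : Matrix n n α)) ((1 : Matrix m m α) ⊗ₖ B) := by
  rw [Commute, SemiconjBy, kronecker_one_mul_one_kronecker, ← mul_kronecker_mul,
    Matrix.mul_one, Matrix.one_mul]

theorem kronecker_one_mul_self {A : Matrix m m α} (hA : A * A = 1) :
    (A ⊗ₖ (1 : Matrix n n α)) * (A ⊗ₖ 1) = 1 := by
  rw [← mul_kronecker_mul, hA, Matrix.mul_one, one_kronecker_one]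

theorem one_kronecker_mul_self {B : Matrix n n α} (hB : B * B = 1) :
    ((1 : Matrix m m α) ⊗ₖ B) * (1 ⊗ₖ B) = 1 := by
  rw [← mul_kronecker_mul, hB, Matrix.mul_one, one_kronecker_one]

end Matrix

section Angles

open Real

theorem min_self_pi_sub_le_pi_div_two (a : ℝ) : min a (π - a) ≤ π / 2 := by
  rcases le_total a (π / 2) with h | h
  · exact min_le_of_left_le h
  · exact min_le_of_right_le (by linarith)

theorem neg_pi_div_two_le_max_neg_neg_pi_add (a : ℝ) : -(π / 2) ≤ max (-a) (-π + a) := by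
  rcases le_total a (π / 2) with h | h
  · exact le_max_of_le_left (by linarith)
  · exact le_max_of_le_right (by linarith)

theorem cos_ne_zero_and_sin_ne_zero {φ : ℝ} (hφ0 : φ ≠ 0) (hlo : -(π / 2) < φ)
    (hhi : φ < π / 2) : cos φ ≠ 0 ∧ sin φ ≠ 0 :=
  ⟨(cos_pos_of_mem_Ioo ⟨hlo, hhi⟩).ne',
    fun h ↦ hφ0 ((sin_eq_zero_iff_of_lt_of_lt (by linarith [pi_pos]) (by linarith [pi_pos])).1 h)⟩

theorem tilted_sos_coefficients {s c φ τ : ℝ} (hsc : s ^ 2 + c ^ 2 = 1) (hcos : cos φ ≠ 0)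
    (hsin : sin φ ≠ 0) (hτ0 : τ ≠ 0) (hτ : 1 / τ ^ 2 = s ^ 2 / tan φ ^ 2 - c ^ 2) :
    (2 * cos φ)⁻¹ ^ 2 + τ ^ 2 * (c * (2 * cos φ)⁻¹) ^ 2 = τ ^ 2 * (s * (2 * sin φ)⁻¹) ^ 2 ∧
      4 * (τ ^ 2 * (s * (2 * sin φ)⁻¹) ^ 2) = 1 + τ ^ 2 := by
  rw [tan_eq_sin_div_cos] at hτ
  field_simp at hτ
  constructor
  · field_simp
    linear_combination hτ
  · field_simp
    linear_combination
      (-4) * hτ + 4 * τ ^ 2 * sin φ ^ 2 * hsc - 4 * τ ^ 2 * s ^ 2 * sin_sq_add_cos_sq φ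

end Angles

theorem isHermitian_tiltedN₀ {φ : ℝ} {n m : ℕ} {A₀ : Matrix (Fin n) (Fin n) ℂ}
    {B₀ B₁ : Matrix (Fin m) (Fin m) ℂ} (hA₀ : A₀.IsHermitian) (hB₀ : B₀.IsHermitian)
    (hB₁ : B₁.IsHermitian) : (tiltedN₀ φ A₀ B₀ B₁).IsHermitian :=
  (hA₀.kronecker isHermitian_one).sub
    ((isHermitian_one.kronecker (hB₀.add hB₁)).smul (IsSelfAdjoint.all _))

theorem isHermitian_tiltedN₁ {θ φ : ℝ} {n m : ℕ} {A₁ : Matrix (Fin n) (Fin n) ℂ}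
    {B₀ B₁ : Matrix (Fin m) (Fin m) ℂ} (hA₁ : A₁.IsHermitian) (hB₀ : B₀.IsHermitian)
    (hB₁ : B₁.IsHermitian) : (tiltedN₁ θ φ A₁ B₀ B₁).IsHermitian :=
  ((hA₁.kronecker isHermitian_one).sub
    (((isHermitian_one.kronecker (hB₀.sub hB₁)).smul (IsSelfAdjoint.all _)).smul
      (IsSelfAdjoint.all _))).sub
    (((hA₁.kronecker (hB₀.add hB₁)).smul (IsSelfAdjoint.all _)).smul (IsSelfAdjoint.all _))

theorem tilted_chsh_sos_decomposition_general (θ φ τ : ℝ)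
    (hφ0 : φ ≠ 0)
    (hφl : max (-(2 * θ)) (-Real.pi + 2 * θ) < φ)
    (hφu : φ < min (2 * θ) (Real.pi - 2 * θ))
    (hτpos : 0 < τ)
    (hτ : 1 / τ ^ 2 = Real.sin (2 * θ) ^ 2 / Real.tan φ ^ 2 - Real.cos (2 * θ) ^ 2)
    (n m : ℕ)
    (A₀ A₁ : Matrix (Fin n) (Fin n) ℂ) (B₀ B₁ : Matrix (Fin m) (Fin m) ℂ)
    (hA₀ : A₀.IsHermitian) (hA₁ : A₁.IsHermitian)
    (hB₀ : B₀.IsHermitian) (hB₁ : B₁.IsHermitian)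
    (hA₀sq : A₀ * A₀ = 1) (hA₁sq : A₁ * A₁ = 1)
    (hB₀sq : B₀ * B₀ = 1) (hB₁sq : B₁ * B₁ = 1) :
    (2 * (1 + τ ^ 2)) • (1 : Matrix (Fin n × Fin m) (Fin n × Fin m) ℂ)
        - tiltedBellOp θ φ τ A₀ A₁ B₀ B₁
      = (tiltedN₀ φ A₀ B₀ B₁)ᴴ * tiltedN₀ φ A₀ B₀ B₁
          + τ ^ 2 • ((tiltedN₁ θ φ A₁ B₀ B₁)ᴴ * tiltedN₁ θ φ A₁ B₀ B₁) := by
  obtain ⟨hcos, hsin⟩ := cos_ne_zero_and_sin_ne_zero hφ0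
    ((neg_pi_div_two_le_max_neg_neg_pi_add _).trans_lt hφl)
    (hφu.trans_le (min_self_pi_sub_le_pi_div_two _))
  obtain ⟨hbal, hnorm⟩ := tilted_sos_coefficients (Real.sin_sq_add_cos_sq (2 * θ)) hcos hsin
    hτpos.ne' hτ
  rw [(isHermitian_tiltedN₀ hA₀ hB₀ hB₁).eq, (isHermitian_tiltedN₁ hA₁ hB₀ hB₁).eq,
    tiltedBellOp, tiltedN₀, tiltedN₁, ← kronecker_one_mul_one_kronecker A₀,
    ← kronecker_one_mul_one_kronecker A₁ (B₀ + B₁),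
    ← kronecker_one_mul_one_kronecker A₁ (B₀ - B₁), kronecker_add, kronecker_sub]
  conv_rhs => rw [smul_smul, smul_smul]
  rw [tilted_sos_identity (kronecker_one_mul_self hA₀sq) (kronecker_one_mul_self hA₁sq)
    (one_kronecker_mul_self hB₀sq) (one_kronecker_mul_self hB₁sq)
    (commute_kronecker_one_one_kronecker _ _) (commute_kronecker_one_one_kronecker _ _)
    (commute_kronecker_one_one_kronecker _ _) (commute_kronecker_one_one_kronecker _ _)
    hbal hnorm]
  module

/-- With `η := 2(1 + τ²)`, the shifted extended tilted-CHSH Bell operator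
admits the sum-of-squares decomposition `η·1 − S = N₀ᴴN₀ + τ²·N₁ᴴN₁`. -/
theorem tilted_chsh_sos_decomposition (θ φ τ : ℝ)
    (hθ : θ ∈ Set.Ioc 0 (Real.pi / 4))
    (hφ0 : φ ≠ 0)
    (hφl : max (-(2 * θ)) (-Real.pi + 2 * θ) < φ)
    (hφu : φ < min (2 * θ) (Real.pi - 2 * θ))
    (hτpos : 0 < τ)
    (hτ : 1 / τ ^ 2 = Real.sin (2 * θ) ^ 2 / Real.tan φ ^ 2 - Real.cos (2 * θ) ^ 2)
    (n m : ℕ) (hn : 0 < n) (hm : 0 < m)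
    (A₀ A₁ : Matrix (Fin n) (Fin n) ℂ) (B₀ B₁ : Matrix (Fin m) (Fin m) ℂ)
    (hA₀ : A₀.IsHermitian) (hA₁ : A₁.IsHermitian)
    (hB₀ : B₀.IsHermitian) (hB₁ : B₁.IsHermitian)
    (hA₀sq : A₀ * A₀ = 1) (hA₁sq : A₁ * A₁ = 1)
    (hB₀sq : B₀ * B₀ = 1) (hB₁sq : B₁ * B₁ = 1) :
    (2 * (1 + τ ^ 2)) • (1 : Matrix (Fin n × Fin m) (Fin n × Fin m) ℂ)
        - tiltedBellOp θ φ τ A₀ A₁ B₀ B₁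
      = (tiltedN₀ φ A₀ B₀ B₁)ᴴ * tiltedN₀ φ A₀ B₀ B₁
          + τ ^ 2 • ((tiltedN₁ θ φ A₁ B₀ B₁)ᴴ * tiltedN₁ θ φ A₁ B₀ B₁) :=
  tilted_chsh_sos_decomposition_general θ φ τ hφ0 hφl hφu hτpos hτ n m A₀ A₁ B₀ B₁ hA₀ hA₁ hB₀ hB₁
    hA₀sq hA₁sq hB₀sq hB₁sq
end

section
/- For the honest two-qubit model, the extended tilted-CHSH Bell operator attains the value 2(1 + τ²): with A₀ := σ_Z, A₁ := σ_X, B_y := cos(φ)·σ_Z + (−1)^y·sin(φ)·σ_X for y ∈ {0,1}, and ψ_θ := cos(θ)·e₀⊗e₀ + sin(θ)·e₁⊗e₁ ∈ ℂ² ⊗ ℂ², one has ⟨ψ_θ, S ψ_θ⟩ = 2(1 + τ²). -/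
set_option maxHeartbeats 2000000


open Matrix Kronecker

/-- The Pauli matrix `σ_Z`. -/
noncomputable def sigmaZ : Matrix (Fin 2) (Fin 2) ℂ := !![1, 0; 0, -1]

/-- The Pauli matrix `σ_X`. -/
noncomputable def sigmaX : Matrix (Fin 2) (Fin 2) ℂ := !![0, 1; 1, 0]

/-- The honest measurement `B_y = cos(φ)·σ_Z + (−1)^y·sin(φ)·σ_X`. -/
noncomputable def honestB (φ : ℝ) (y : ℕ) : Matrix (Fin 2) (Fin 2) ℂ :=
  Real.cos φ • sigmaZ + ((-1 : ℝ) ^ y * Real.sin φ) • sigmaX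

/-- The partially entangled state `ψ_θ = cos(θ)·e₀⊗e₀ + sin(θ)·e₁⊗e₁`. -/
noncomputable def honestState (θ : ℝ) : Fin 2 × Fin 2 → ℂ := fun p =>
  if p = (0, 0) then (Real.cos θ : ℂ) else if p = (1, 1) then (Real.sin θ : ℂ) else 0

/-- The honest two-qubit model attains the value `2(1 + τ²)` on the extended
tilted-CHSH Bell operator: `⟨ψ_θ, S ψ_θ⟩ = 2(1 + τ²)`. -/
theorem tilted_chsh_honest_value (θ φ τ : ℝ)
    (hθ : θ ∈ Set.Ioc 0 (Real.pi / 4))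
    (hφ0 : φ ≠ 0)
    (hφl : max (-(2 * θ)) (-Real.pi + 2 * θ) < φ)
    (hφu : φ < min (2 * θ) (Real.pi - 2 * θ))
    (hτpos : 0 < τ)
    (hτ : 1 / τ ^ 2 = Real.sin (2 * θ) ^ 2 / Real.tan φ ^ 2 - Real.cos (2 * θ) ^ 2) :
    star (honestState θ) ⬝ᵥ
        (tiltedBellOp θ φ τ sigmaZ sigmaX (honestB φ 0) (honestB φ 1) *ᵥ honestState θ)
      = ((2 * (1 + τ ^ 2) : ℝ) : ℂ) := by
  obtain ⟨hθ0, hθ4⟩ := hθ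
  have hπ := Real.pi_pos
  have h2θ : 2 * θ ≤ Real.pi / 2 := by linarith
  have hcos : Real.cos φ ≠ 0 := by
    apply ne_of_gt
    apply Real.cos_pos_of_mem_Ioo
    constructor
    · have := lt_of_le_of_lt (le_max_left _ _) hφl; linarith
    · have := lt_of_lt_of_le hφu (min_le_left _ _); linarith
  have hsin : Real.sin φ ≠ 0 := by
    rcases lt_or_gt_of_ne hφ0 with h | h
    · have : Real.sin (-φ) > 0 := by
        apply Real.sin_pos_of_pos_of_lt_pi; · linarith
        have := lt_of_le_of_lt (le_max_right _ _) hφl; linarith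
      rw [Real.sin_neg] at this; linarith
    · apply ne_of_gt; apply Real.sin_pos_of_pos_of_lt_pi h
      have := lt_of_lt_of_le hφu (min_le_right _ _); linarith
  have hs2 : Real.sin (2*θ) = 2 * Real.sin θ * Real.cos θ := by
    rw [Real.sin_two_mul]
  have hc2 : Real.cos (2*θ) = Real.cos θ ^ 2 - Real.sin θ ^ 2 := Real.cos_two_mul' θ
  have hpyth := Real.sin_sq_add_cos_sq θ
  have hcC : (Real.cos φ : ℂ) ≠ 0 := by exact_mod_cast hcos
  have hsC : (Real.sin φ : ℂ) ≠ 0 := by exact_mod_cast hsin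
  show _ = _
  simp only [tiltedBellOp, honestB, honestState, sigmaZ, sigmaX]
  simp only [dotProduct, mulVec, Fintype.sum_prod_type, Fin.sum_univ_two, Matrix.add_apply,
    Matrix.sub_apply, Matrix.smul_apply, Matrix.kroneckerMap_apply, Matrix.one_apply,
    Pi.star_apply, smul_eq_mul]
  norm_num [Matrix.cons_val_zero, Matrix.cons_val_one, Matrix.head_cons, Prod.ext_iff]
  have hcc : Complex.cos ↑φ = ((Real.cos φ : ℝ) : ℂ) := (Complex.ofReal_cos φ).symm
  have hss : Complex.sin ↑φ = ((Real.sin φ : ℝ) : ℂ) := (Complex.ofReal_sin φ).symm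
  have h2c : ((2*θ:ℝ):ℂ) = 2 * (θ:ℂ) := by push_cast; ring
  have hcc2 : Complex.cos (2 * ↑θ) = ((Real.cos (2*θ) : ℝ) : ℂ) := by
    rw [← h2c, ← Complex.ofReal_cos]
  have hss2 : Complex.sin (2 * ↑θ) = ((Real.sin (2*θ) : ℝ) : ℂ) := by
    rw [← h2c, ← Complex.ofReal_sin]
  have hpC : (Real.sin θ : ℂ)^2 + (Real.cos θ : ℂ)^2 = 1 := by exact_mod_cast hpyth
  simp only [hcc, hss, hcc2, hss2, inv_mul_cancel₀ hcC, inv_mul_cancel₀ hsC, honestState,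
    hs2, hc2]
  norm_num [Complex.conj_ofReal, Prod.ext_iff]
  simp only [← Complex.ofReal_cos, ← Complex.ofReal_sin, Complex.conj_ofReal]
  linear_combination (2 + 2*(τ:ℂ)^2*((Real.sin θ:ℂ)^2+(Real.cos θ:ℂ)^2+1)) * hpC
end
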